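/- Let B be a monotone bead distribution of n beads on [μ,∞) with gaps b₁ = B₁ − μ, bₖ = Bₖ − B_{k−1}, satisfying bₖ > b_{k−2} for all 3 ≤ k ≤ n (with also b₁ ≤ b₂ ≤ ⋯ ≤ bₙ). Then for every monotone bead distribution A with Aₖ ≤ Bₖ for all k, B can be obtained from A by a finite sequence of admissible bead slides. -/

import Mathlib

/-- `A` is a monotone bead distribution of `n` beads on `[μ,∞)`.
We use the convention `A 0 = μ`, so the beads are `A 1 < ⋯ < A n` with
`μ ≤ A 1` and nondecreasing successive gaps. -/
def BeadMono (n : ℕ) (μ : ℝ) (A : ℕ → ℝ) : Prop :=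
  A 0 = μ ∧ A 0 ≤ A 1 ∧
  (∀ k, 2 ≤ k → k ≤ n → A (k - 1) < A k) ∧
  (∀ k, 2 ≤ k → k ≤ n → A (k - 1) - A (k - 2) ≤ A k - A (k - 1))

/-- One admissible bead slide: move the `k`-th bead to the right by `δ ≥ 0`
so that the result is again monotone. -/
def BeadSlide (n : ℕ) (μ : ℝ) (A B : ℕ → ℝ) : Prop :=
  ∃ k δ, 1 ≤ k ∧ k ≤ n ∧ 0 ≤ δ ∧
    B = Function.update A k (A k + δ) ∧ BeadMono n μ B

/-- `BeadReach n μ A B`: `B` is obtained from `A` by finitely many admissible slides. -/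
def BeadReach (n : ℕ) (μ : ℝ) : (ℕ → ℝ) → (ℕ → ℝ) → Prop :=
  Relation.ReflTransGen (BeadSlide n μ)

/-!
Sweep the beads from the top down, moving each one as far as `B` and the convexity constraint
with its neighbours allow. A sweep is a sequence of admissible slides, and by convexity of `B` it
shrinks the largest deficit `B k - A k` by the factor `1 - 2⁻ⁿ`. Once all deficits are small, the
strict inequality `b 3 > b 1` (or `b 2 > b 1`) leaves enough slack for one more sweep to put bead
1 exactly at `B 1`. The beads above it then form a monotone distribution of `n - 1` beads on
`[B 1, ∞)` lying below `B`, and induction on `n` finishes.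
-/

theorem beadMono_iff {n : ℕ} {μ : ℝ} {A : ℕ → ℝ} :
    BeadMono n μ A ↔ A 0 = μ ∧ A 0 ≤ A 1 ∧ (∀ i, 1 ≤ i → i + 1 ≤ n → A i < A (i + 1)) ∧
      ∀ i, i + 2 ≤ n → 2 * A (i + 1) ≤ A i + A (i + 2) := by
  refine and_congr_right' (and_congr_right' (and_congr ⟨fun h i hi hin => ?_, fun h k hk hkn => ?_⟩
    ⟨fun h i hin => ?_, fun h k hk hkn => ?_⟩))
  · simpa using h (i + 1) (by omega) hin
  · obtain ⟨i, rfl⟩ : ∃ i, k = i + 1 := ⟨k - 1, by omega⟩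
    simpa using h i (by omega) hkn
  · have := h (i + 2) (by omega) hin
    simp only [Nat.add_sub_cancel, Nat.add_one_sub_one] at this
    linarith
  · obtain ⟨i, rfl⟩ : ∃ i, k = i + 2 := ⟨k - 2, by omega⟩
    have := h i hkn
    simp only [Nat.add_sub_cancel, Nat.add_one_sub_one]
    linarith

namespace BeadMono

variable {n : ℕ} {μ : ℝ} {A : ℕ → ℝ}

theorem lt_succ (h : BeadMono n μ A) {i : ℕ} (hi : 1 ≤ i) (hin : i + 1 ≤ n) : A i < A (i + 1) :=
  (beadMono_iff.1 h).2.2.1 i hi hin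

theorem le_succ (h : BeadMono n μ A) {i : ℕ} (hin : i + 1 ≤ n) : A i ≤ A (i + 1) := by
  rcases i.eq_zero_or_pos with rfl | hi
  · exact h.2.1
  · exact (h.lt_succ hi hin).le

theorem two_mul_le (h : BeadMono n μ A) {i : ℕ} (hin : i + 2 ≤ n) :
    2 * A (i + 1) ≤ A i + A (i + 2) :=
  (beadMono_iff.1 h).2.2.2 i hin

theorem tail (h : BeadMono (n + 1) μ A) (hn : 1 ≤ n) : BeadMono n (A 1) (fun k => A (k + 1)) :=
  beadMono_iff.2 ⟨rfl, h.le_succ (by omega), fun i hi hin => h.lt_succ (by omega) (by omega),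
    fun i hin => h.two_mul_le (by omega)⟩

end BeadMono

theorem BeadSlide.le {n : ℕ} {μ : ℝ} {A B : ℕ → ℝ} (h : BeadSlide n μ A B) (j : ℕ) : A j ≤ B j := by
  obtain ⟨k, δ, -, -, hδ, rfl, -⟩ := h
  rcases eq_or_ne j k with rfl | hne
  · simpa using hδ
  · simp [hne]

theorem BeadReach.le {n : ℕ} {μ : ℝ} {A B : ℕ → ℝ} (h : BeadReach n μ A B) (j : ℕ) : A j ≤ B j := by
  induction h with
  | refl => exact le_rfl
  | tail _ hslide ih => exact ih.trans (hslide.le j)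

/-- The position of bead `k` after one top-down sweep from `O` towards `B`: each bead moves as
far as `B` and the midpoint of its new upper and old lower neighbour allow, the latter being the
largest position that keeps the gaps nondecreasing. -/
noncomputable def sweep (B O : ℕ → ℝ) (n k : ℕ) : ℝ :=
  if n ≤ k then B n else min (B k) ((sweep B O n (k + 1) + O (k - 1)) / 2)
termination_by n - k

noncomputable def sweepFrom (B O : ℕ → ℝ) (n m k : ℕ) : ℝ :=
  if m ≤ k ∧ k ≤ n then sweep B O n k else O k

section Sweep

variable {n : ℕ} {μ : ℝ} {B O : ℕ → ℝ}

theorem sweep_of_le {k : ℕ} (h : n ≤ k) : sweep B O n k = B n := by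
  rw [sweep, if_pos h]

theorem sweep_of_lt {k : ℕ} (h : k < n) :
    sweep B O n k = min (B k) ((sweep B O n (k + 1) + O (k - 1)) / 2) := by
  rw [sweep, if_neg h.not_ge]

theorem sweep_le {k : ℕ} (hk : k ≤ n) : sweep B O n k ≤ B k := by
  rcases hk.eq_or_lt with rfl | hlt
  · exact (sweep_of_le le_rfl).le
  · exact (sweep_of_lt hlt).trans_le (min_le_left _ _)

theorem sweep_succ_le {i : ℕ} (h : i + 1 < n) :
    sweep B O n (i + 1) ≤ (sweep B O n (i + 2) + O i) / 2 :=
  (sweep_of_lt h).trans_le (min_le_right _ _)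

theorem sweepFrom_le (k : ℕ) (hk : 1 ≤ k) (hkn : k ≤ n) : sweepFrom B O n 1 k ≤ B k := by
  rw [sweepFrom, if_pos ⟨hk, hkn⟩]
  exact sweep_le hkn

variable (hO : BeadMono n μ O) (hOB : ∀ k, 1 ≤ k → k ≤ n → O k ≤ B k)
include hO hOB

theorem le_sweep (k : ℕ) (hk : 1 ≤ k) (hkn : k ≤ n) : O k ≤ sweep B O n k := by
  rcases hkn.eq_or_lt with rfl | hlt
  · rw [sweep_of_le le_rfl]
    exact hOB k hk le_rfl
  · have hup := le_sweep (k + 1) (by omega) hlt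
    obtain ⟨i, rfl⟩ : ∃ i, k = i + 1 := ⟨k - 1, by omega⟩
    have hconv := hO.two_mul_le (i := i) (by omega)
    rw [sweep_of_lt hlt]
    exact le_min (hOB _ hk hkn) (by simp only [Nat.add_one_sub_one]; linarith)
termination_by n - k

theorem sweep_lt_sweep {i : ℕ} (hi : 1 ≤ i) (hin : i + 1 ≤ n) :
    sweep B O n i < sweep B O n (i + 1) := by
  obtain ⟨j, rfl⟩ : ∃ j, i = j + 1 := ⟨i - 1, by omega⟩
  linarith [sweep_succ_le (B := B) (O := O) (show j + 1 < n by omega),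
    le_sweep hO hOB (j + 2) (by omega) hin, hO.le_succ (i := j) (by omega),
    hO.lt_succ (i := j + 1) (by omega) hin]

theorem le_sweepFrom {m k : ℕ} (hm : 1 ≤ m) (hkn : k ≤ n) : O k ≤ sweepFrom B O n m k := by
  unfold sweepFrom
  split_ifs with h
  · exact le_sweep hO hOB k (hm.trans h.1) hkn
  · exact le_rfl

theorem sweepFrom_beadMono {m : ℕ} (hm : 1 ≤ m) : BeadMono n μ (sweepFrom B O n m) := by
  have hlow : ∀ k, k < m → sweepFrom B O n m k = O k := fun k hk => if_neg (by omega)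
  have h0 : sweepFrom B O n m 0 = O 0 := hlow 0 hm
  have hhigh : ∀ k, m ≤ k → k ≤ n → sweepFrom B O n m k = sweep B O n k :=
    fun k hk hkn => if_pos ⟨hk, hkn⟩
  refine beadMono_iff.2 ⟨h0.trans hO.1, ?_, fun i hi hin => ?_, fun i hin => ?_⟩
  · rcases Nat.eq_zero_or_pos n with rfl | hn
    · rw [h0, sweepFrom, if_neg (by omega)]; exact hO.2.1
    · rw [h0]; exact hO.2.1.trans (le_sweepFrom hO hOB hm hn)
  · by_cases him : m ≤ i
    · rw [hhigh i him (by omega), hhigh (i + 1) (by omega) hin]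
      exact sweep_lt_sweep hO hOB hi hin
    · rw [hlow i (by omega)]
      exact (hO.lt_succ hi hin).trans_le (le_sweepFrom hO hOB hm hin)
  · have hup := le_sweepFrom hO hOB hm (k := i + 2) hin
    by_cases him : m ≤ i + 1
    · have := le_sweepFrom hO hOB hm (k := i) (by omega)
      have := sweep_succ_le (B := B) (O := O) (show i + 1 < n by omega)
      rw [hhigh (i + 1) him (by omega), hhigh (i + 2) (by omega) hin]
      rw [hhigh (i + 2) (by omega) hin] at hup
      linarith
    · rw [hlow (i + 1) (by omega), hlow i (by omega)]
      linarith [hO.two_mul_le hin]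

theorem sweepFrom_slide {m : ℕ} (hm : 1 ≤ m) (hmn : m ≤ n) :
    BeadSlide n μ (sweepFrom B O n (m + 1)) (sweepFrom B O n m) := by
  have hold : sweepFrom B O n (m + 1) m = O m := if_neg (by omega)
  refine ⟨m, sweep B O n m - O m, hm, hmn, sub_nonneg.2 (le_sweep hO hOB m hm hmn), ?_,
    sweepFrom_beadMono hO hOB hm⟩
  funext k
  rw [hold, add_sub_cancel]
  rcases eq_or_ne k m with rfl | hne
  · simp [sweepFrom, hmn]
  · simp only [sweepFrom, Function.update_of_ne hne]
    congr 1
    apply propext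
    omega

theorem reach_sweepFrom (m : ℕ) (hm : 1 ≤ m) (hmn : m ≤ n + 1) :
    BeadReach n μ O (sweepFrom B O n m) := by
  rcases hmn.eq_or_lt with rfl | hlt
  · have : sweepFrom B O n (n + 1) = O := funext fun k => if_neg (by omega)
    rw [this]
    exact .refl
  · exact (reach_sweepFrom (m + 1) (by omega) hlt).tail (sweepFrom_slide hO hOB hm (by omega))
termination_by n + 1 - m

end Sweep

theorem one_sub_half_pow_nonneg (j : ℕ) : (0 : ℝ) ≤ 1 - (1 / 2) ^ j :=
  sub_nonneg.2 (pow_le_one₀ (by norm_num) (by norm_num))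

section Convergence

variable {n : ℕ} {μ : ℝ} {B O : ℕ → ℝ}

theorem sub_sweep_le (hB : BeadMono n μ B) {M : ℝ} (hM0 : 0 ≤ M) (hM : ∀ k ≤ n, B k - O k ≤ M)
    (k : ℕ) (hk : 1 ≤ k) (hkn : k ≤ n) :
    B k - sweep B O n k ≤ (1 - (1 / 2) ^ (n - k)) * M := by
  rcases hkn.eq_or_lt with rfl | hlt
  · simp [sweep_of_le]
  · have hup := sub_sweep_le hB hM0 hM (k + 1) (by omega) hlt
    obtain ⟨i, rfl⟩ : ∃ i, k = i + 1 := ⟨k - 1, by omega⟩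
    have hconv := hB.two_mul_le (i := i) (by omega)
    have hlow := hM i (by omega)
    have hpow : (1 / 2 : ℝ) ^ (n - (i + 1)) = (1 / 2) ^ (n - (i + 2)) / 2 := by
      rw [show n - (i + 1) = n - (i + 2) + 1 by omega, pow_succ]; ring
    have hnonneg : 0 ≤ (1 - (1 / 2 : ℝ) ^ (n - (i + 1))) * M :=
      mul_nonneg (one_sub_half_pow_nonneg _) hM0
    rw [sub_le_comm, sweep_of_lt hlt]
    refine le_min (by linarith) ?_
    rw [Nat.add_one_sub_one, hpow]
    linarith
termination_by n - k

theorem sub_sweepFrom_le (hB : BeadMono n μ B) (hO : BeadMono n μ O) {M : ℝ} (hM0 : 0 ≤ M)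
    (hM : ∀ k ≤ n, B k - O k ≤ M) (k : ℕ) (hkn : k ≤ n) :
    B k - sweepFrom B O n 1 k ≤ (1 - (1 / 2) ^ n) * M := by
  rcases k.eq_zero_or_pos with rfl | hk
  · rw [sweepFrom, if_neg (by omega), hB.1, hO.1, sub_self]
    exact mul_nonneg (one_sub_half_pow_nonneg n) hM0
  · rw [sweepFrom, if_pos ⟨hk, hkn⟩]
    refine (sub_sweep_le hB hM0 hM k hk hkn).trans (mul_le_mul_of_nonneg_right ?_ hM0)
    gcongr 1 - ?_
    exact pow_le_pow_of_le_one (by norm_num) (by norm_num) (Nat.sub_le n k)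

end Convergence

theorem exists_reach_sub_le {n : ℕ} {μ : ℝ} {A B : ℕ → ℝ} (hB : BeadMono n μ B)
    (hA : BeadMono n μ A) (hAB : ∀ k, 1 ≤ k → k ≤ n → A k ≤ B k) {M : ℝ} (hM0 : 0 ≤ M)
    (hM : ∀ k ≤ n, B k - A k ≤ M) (p : ℕ) :
    ∃ O, BeadReach n μ A O ∧ BeadMono n μ O ∧ (∀ k, 1 ≤ k → k ≤ n → O k ≤ B k) ∧
      ∀ k ≤ n, B k - O k ≤ (1 - (1 / 2) ^ n) ^ p * M := by
  induction p with
  | zero => exact ⟨A, .refl, hA, hAB, by simpa using hM⟩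
  | succ p ih =>
    obtain ⟨O, hAO, hO, hOB, hdef⟩ := ih
    refine ⟨sweepFrom B O n 1, hAO.trans (reach_sweepFrom hO hOB 1 le_rfl (by omega)),
      sweepFrom_beadMono hO hOB le_rfl, sweepFrom_le, fun k hkn => ?_⟩
    rw [pow_succ, mul_comm _ (1 - _), mul_assoc]
    exact sub_sweepFrom_le hB hO (mul_nonneg (pow_nonneg (one_sub_half_pow_nonneg n) p) hM0) hdef k hkn

theorem exists_sweep_one_eq {n : ℕ} {μ : ℝ} {B : ℕ → ℝ} (hB : BeadMono n μ B)
    (hgap : ∀ k, 3 ≤ k → k ≤ n → B (k - 2) - B (k - 3) < B k - B (k - 1)) (hn : 1 ≤ n) :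
    ∃ ε > 0, ∀ O, BeadMono n μ O → (∀ k, 1 ≤ k → k ≤ n → O k ≤ B k) →
      (∀ k ≤ n, B k - O k < ε) → sweep B O n 1 = B 1 := by
  rcases hn.eq_or_lt with rfl | hn2
  · exact ⟨1, one_pos, fun O _ _ _ => sweep_of_le le_rfl⟩
  have hconv := hB.two_mul_le (i := 0) hn2
  have arrive : ∀ O, BeadMono n μ O → 2 * B 1 ≤ sweep B O n 2 + B 0 → sweep B O n 1 = B 1 :=
    fun O hO h2 => by
      rw [sweep_of_lt hn2, Nat.sub_self, hO.1, ← hB.1]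
      exact min_eq_left (by linarith)
  by_cases hb : B 1 - B 0 < B 2 - B 1
  · refine ⟨B 2 - B 1 - (B 1 - B 0), sub_pos.2 hb, fun O hO hOB hdef => arrive O hO ?_⟩
    linarith [hdef 2 hn2, le_sweep hO hOB 2 (by omega) hn2]
  rcases (Nat.succ_le_of_lt hn2).eq_or_lt with rfl | hn3
  · exact ⟨1, one_pos, fun O hO _ _ => arrive O hO (by rw [sweep_of_le le_rfl]; linarith)⟩
  have hb3 : B 1 - B 0 < B 3 - B 2 := hgap 3 le_rfl hn3
  refine ⟨(B 3 - B 2 - (B 1 - B 0)) / 2, by linarith, fun O hO hOB hdef => arrive O hO ?_⟩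
  have h2 : sweep B O n 2 = B 2 := by
    rw [sweep_of_lt hn3]
    refine min_eq_left ?_
    linarith [hdef 1 (by omega), hdef 3 hn3, le_sweep hO hOB 3 (by omega) hn3]
  linarith

theorem exists_reach_eq_one {n : ℕ} {μ : ℝ} {A B : ℕ → ℝ} (hB : BeadMono n μ B)
    (hgap : ∀ k, 3 ≤ k → k ≤ n → B (k - 2) - B (k - 3) < B k - B (k - 1))
    (hA : BeadMono n μ A) (hAB : ∀ k, 1 ≤ k → k ≤ n → A k ≤ B k) (hn : 1 ≤ n) :
    ∃ D, BeadReach n μ A D ∧ BeadMono n μ D ∧ (∀ k, 1 ≤ k → k ≤ n → D k ≤ B k) ∧ D 1 = B 1 := by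
  obtain ⟨ε, hε, harrive⟩ := exists_sweep_one_eq hB hgap hn
  obtain ⟨M, hM⟩ := ((Finset.range (n + 1)).image fun k => B k - A k).exists_le
  replace hM : ∀ k ≤ n, B k - A k ≤ M :=
    fun k hk => hM _ (Finset.mem_image_of_mem _ (Finset.mem_range.2 (by omega)))
  have hM0 : 0 ≤ M := by simpa [hA.1, hB.1] using hM 0 (Nat.zero_le n)
  have hθ : Filter.Tendsto (fun p => (1 - (1 / 2 : ℝ) ^ n) ^ p * M) Filter.atTop (nhds 0) := by
    simpa using (tendsto_pow_atTop_nhds_zero_of_lt_one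
      (one_sub_half_pow_nonneg n)
      (sub_lt_self 1 (by positivity))).mul_const M
  obtain ⟨p, hp⟩ := (hθ.eventually (gt_mem_nhds hε)).exists
  obtain ⟨O, hAO, hO, hOB, hdef⟩ := exists_reach_sub_le hB hA hAB hM0 hM p
  refine ⟨sweepFrom B O n 1, hAO.trans (reach_sweepFrom hO hOB 1 le_rfl (by omega)),
    sweepFrom_beadMono hO hOB le_rfl, sweepFrom_le, ?_⟩
  rw [sweepFrom, if_pos ⟨le_rfl, hn⟩]
  exact harrive O hO hOB fun k hk => (hdef k hk).trans_lt hp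

def prepend (μ : ℝ) (E : ℕ → ℝ) : ℕ → ℝ
  | 0 => μ
  | k + 1 => E k

theorem prepend_update (μ : ℝ) (E : ℕ → ℝ) (k : ℕ) (x : ℝ) :
    prepend μ (Function.update E k x) = Function.update (prepend μ E) (k + 1) x := by
  funext j
  cases j with
  | zero => rfl
  | succ j => simp [prepend, Function.update_apply]

theorem BeadMono.prepend {n : ℕ} {μ ν : ℝ} {G : ℕ → ℝ} (hG : BeadMono n ν G) (hμ : μ ≤ G 0)
    (h01 : G 0 < G 1) (hgap : G 0 - μ ≤ G 1 - G 0) : BeadMono (n + 1) μ (prepend μ G) := by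
  refine beadMono_iff.2 ⟨rfl, hμ, fun i hi hin => ?_, fun i hin => ?_⟩
  · obtain ⟨j, rfl⟩ : ∃ j, i = j + 1 := ⟨i - 1, by omega⟩
    rcases j.eq_zero_or_pos with rfl | hj
    · exact h01
    · exact hG.lt_succ hj (by omega)
  · cases i with
    | zero => show 2 * G 0 ≤ μ + G 1; linarith
    | succ i => exact hG.two_mul_le (by omega)

theorem BeadReach.prepend_of_tail {n : ℕ} {μ : ℝ} {D E : ℕ → ℝ} (hD : BeadMono (n + 1) μ D)
    (hn : 1 ≤ n) (h : BeadReach n (D 1) (fun k => D (k + 1)) E) :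
    BeadReach (n + 1) μ D (prepend μ E) := by
  induction h with
  | refl =>
    have : prepend μ (fun k => D (k + 1)) = D :=
      funext fun k => by cases k <;> simp [prepend, hD.1]
    rw [this]
    exact .refl
  | @tail F G hDF hFG ih =>
    have h2 : D 2 ≤ G 1 := (BeadReach.le hDF 1).trans (hFG.le 1)
    have h12 : D 1 < D 2 := hD.lt_succ le_rfl (by omega)
    have hconv := hD.two_mul_le (i := 0) (by omega)
    obtain ⟨k, δ, hk, hkn, hδ, rfl, hG⟩ := hFG
    refine ih.tail ⟨k + 1, δ, by omega, by omega, hδ, prepend_update μ F k _, hG.prepend ?_ ?_ ?_⟩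
    all_goals rw [hG.1]
    · exact hD.1 ▸ hD.2.1
    · exact h12.trans_le h2
    · rw [← hD.1]; linarith

theorem gap_condition_tail {n : ℕ} {B : ℕ → ℝ}
    (hgap : ∀ k, 3 ≤ k → k ≤ n + 1 → B (k - 2) - B (k - 3) < B k - B (k - 1)) :
    ∀ k, 3 ≤ k → k ≤ n → B (k - 2 + 1) - B (k - 3 + 1) < B (k + 1) - B (k - 1 + 1) := by
  intro k hk hkn
  obtain ⟨j, rfl⟩ : ∃ j, k = j + 3 := ⟨k - 3, by omega⟩
  simpa using hgap (j + 4) (by omega) (by omega)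

theorem slide_of_gap_condition (n : ℕ) (μ : ℝ) (B : ℕ → ℝ)
    (hB : BeadMono n μ B)
    (hgap : ∀ k, 3 ≤ k → k ≤ n → B (k - 2) - B (k - 3) < B k - B (k - 1)) :
    ∀ A : ℕ → ℝ, BeadMono n μ A → (∀ k, 1 ≤ k → k ≤ n → A k ≤ B k) →
      ∃ C : ℕ → ℝ, BeadReach n μ A C ∧ ∀ k, k ≤ n → C k = B k := by
  induction n generalizing μ B with
  | zero => exact fun A hA _ => ⟨A, .refl, fun k hk => by rw [Nat.le_zero.1 hk, hA.1, hB.1]⟩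
  | succ n ih =>
    intro A hA hAB
    obtain ⟨D, hAD, hD, hDB, hD1⟩ := exists_reach_eq_one hB hgap hA hAB (Nat.succ_pos n)
    rcases n.eq_zero_or_pos with rfl | hn
    · refine ⟨D, hAD, fun k hk => ?_⟩
      interval_cases k
      exacts [hD.1.trans hB.1.symm, hD1]
    obtain ⟨E, hDE, hE⟩ := ih (B 1) (fun k => B (k + 1)) (hB.tail hn) (gap_condition_tail hgap)
      (fun k => D (k + 1)) (hD1 ▸ hD.tail hn) fun k hk hkn => hDB (k + 1) (by omega) (by omega)
    refine ⟨prepend μ E, hAD.trans (BeadReach.prepend_of_tail hD hn (hD1 ▸ hDE)), fun k hk => ?_⟩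
    cases k with
    | zero => exact hB.1.symm
    | succ k => exact hE k (by omega)
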